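/- arXiv:2109.02083 — 3 statements merged into one kernel-verified Lean document; each statement's English description precedes it below -/
import Mathlib

section
/- If f : ℝ → ℝ is r-times continuously differentiable with f and f^{(r)} bounded (and all intermediate derivatives bounded), then for every δ > 0, ‖(I - T_δ)^r f‖ ≤ 2^{-r} δ^r ‖f^{(r)}‖ in the sup norm. -/
/-- Forward Steklov operator `T_δ f(x) = (1/δ) ∫₀^δ f(x+t) dt`. -/
noncomputable def steklov (δ : ℝ) (f : ℝ → ℝ) : ℝ → ℝ :=
  fun x => (1 / δ) * ∫ t in (0:ℝ)..δ, f (x + t)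

/-- The difference operator `(I - T_δ) f`. -/
noncomputable def steklovDiff (δ : ℝ) (f : ℝ → ℝ) : ℝ → ℝ :=
  fun x => f x - steklov δ f x

/-!
On C¹ functions `I - T_δ` commutes with differentiation, and `|g x - T_δ g x| ≤ (δ/2) sup |g'|`
because `g x - T_δ g x` is the mean over `t ∈ [0, δ]` of `g x - g (x + t)`, which is at most
`t sup |g'|`. Writing `(I - T_δ)^(j+1) g = (I - T_δ) h` with `h' = (I - T_δ)^j g'`, induction on
`j` gives `|(I - T_δ)^j g| ≤ (δ/2)^j sup |g^(j)|`.
-/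

open intervalIntegral

section Steklov

variable {δ : ℝ} {f : ℝ → ℝ}

theorem steklov_eq_sub_primitive (hf : Continuous f) :
    steklov δ f = fun x => 1 / δ * ((∫ t in (0 : ℝ)..x + δ, f t) - ∫ t in (0 : ℝ)..x, f t) := by
  funext x
  rw [steklov, integral_comp_add_left,
    integral_interval_sub_left (hf.intervalIntegrable _ _) (hf.intervalIntegrable _ _)]
  simp

theorem hasDerivAt_steklov (hf : Continuous f) (x : ℝ) :
    HasDerivAt (steklov δ f) (1 / δ * (f (x + δ) - f x)) x := by
  have hF (y : ℝ) : HasDerivAt (fun u => ∫ t in (0 : ℝ)..u, f t) (f y) y :=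
    integral_hasDerivAt_right (hf.intervalIntegrable _ _) (hf.stronglyMeasurableAtFilter _ _)
      hf.continuousAt
  rw [steklov_eq_sub_primitive hf]
  exact (((hF (x + δ)).comp_add_const x δ).sub (hF x)).const_mul _

theorem contDiff_succ_steklov {n : ℕ} (hf : ContDiff ℝ n f) :
    ContDiff ℝ (n + 1 : ℕ) (steklov δ f) := by
  have hderiv : deriv (steklov δ f) = fun x => 1 / δ * (f (x + δ) - f x) :=
    funext fun x => (hasDerivAt_steklov hf.continuous x).deriv
  rw [Nat.cast_succ, contDiff_succ_iff_deriv, hderiv]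
  refine ⟨fun x => (hasDerivAt_steklov hf.continuous x).differentiableAt, by simp, ?_⟩
  exact contDiff_const.mul ((hf.comp (contDiff_id.add contDiff_const)).sub hf)

theorem contDiff_steklovDiff {n : ℕ} (hf : ContDiff ℝ n f) : ContDiff ℝ n (steklovDiff δ f) :=
  hf.sub ((contDiff_succ_steklov hf).of_le (by exact_mod_cast n.le_succ))

theorem steklov_deriv (hf : ContDiff ℝ 1 f) (x : ℝ) :
    steklov δ (deriv f) x = 1 / δ * (f (x + δ) - f x) := by
  rw [steklov, integral_comp_add_left,
    integral_deriv_eq_sub (fun t _ => hf.differentiable one_ne_zero t)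
      ((hf.continuous_deriv le_rfl).intervalIntegrable _ _)]
  simp

theorem hasDerivAt_steklovDiff (hf : ContDiff ℝ 1 f) (x : ℝ) :
    HasDerivAt (steklovDiff δ f) (steklovDiff δ (deriv f) x) x := by
  rw [steklovDiff, steklov_deriv hf]
  exact (hf.differentiable one_ne_zero x).hasDerivAt.sub (hasDerivAt_steklov hf.continuous x)

theorem deriv_steklovDiff (hf : ContDiff ℝ 1 f) :
    deriv (steklovDiff δ f) = steklovDiff δ (deriv f) :=
  funext fun x => (hasDerivAt_steklovDiff hf x).deriv

theorem contDiff_iterate_steklovDiff {n : ℕ} (hf : ContDiff ℝ n f) (j : ℕ) :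
    ContDiff ℝ n ((steklovDiff δ)^[j] f) := by
  induction j with
  | zero => exact hf
  | succ j ih => simpa only [Function.iterate_succ_apply'] using contDiff_steklovDiff ih

theorem deriv_iterate_steklovDiff (hf : ContDiff ℝ 1 f) (j : ℕ) :
    deriv ((steklovDiff δ)^[j] f) = (steklovDiff δ)^[j] (deriv f) := by
  induction j with
  | zero => rfl
  | succ j ih =>
    rw [Function.iterate_succ_apply', Function.iterate_succ_apply',
      deriv_steklovDiff (contDiff_iterate_steklovDiff hf j), ih]

theorem abs_steklovDiff_le (hf : ContDiff ℝ 1 f) {M : ℝ} (hM : ∀ y, |deriv f y| ≤ M)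
    (hδ : 0 < δ) (x : ℝ) : |steklovDiff δ f x| ≤ δ / 2 * M := by
  have hshift : Continuous fun t => f (x + t) := hf.continuous.comp (continuous_const_add x)
  have hmean : steklovDiff δ f x = 1 / δ * ∫ t in (0 : ℝ)..δ, (f x - f (x + t)) := by
    rw [integral_sub intervalIntegrable_const (hshift.intervalIntegrable _ _), integral_const,
      steklovDiff, steklov]
    field_simp
    ring
  have hlip (t : ℝ) (ht : t ∈ Set.Ioc 0 δ) : ‖f x - f (x + t)‖ ≤ M * t := by
    have := convex_univ.norm_image_sub_le_of_norm_deriv_le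
      (fun y _ => hf.differentiable one_ne_zero y) (fun y _ => hM y)
      (Set.mem_univ (x + t)) (Set.mem_univ x)
    simpa [abs_of_pos ht.1] using this
  have hint : |∫ t in (0 : ℝ)..δ, (f x - f (x + t))| ≤ M * (δ ^ 2 / 2) := by
    calc |∫ t in (0 : ℝ)..δ, (f x - f (x + t))| ≤ ∫ t in (0 : ℝ)..δ, M * t :=
          norm_integral_le_of_norm_le hδ.le (.of_forall hlip)
            ((continuous_const.mul continuous_id).intervalIntegrable _ _)
      _ = M * (δ ^ 2 / 2) := by rw [integral_const_mul, integral_id]; ring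
  rw [hmean, abs_mul, abs_of_pos (by positivity : 0 < 1 / δ)]
  calc 1 / δ * |∫ t in (0 : ℝ)..δ, (f x - f (x + t))| ≤ 1 / δ * (M * (δ ^ 2 / 2)) := by gcongr
    _ = δ / 2 * M := by field_simp

theorem abs_iterate_steklovDiff_le {M : ℝ} (hδ : 0 < δ) (j : ℕ) (hf : ContDiff ℝ j f)
    (hM : ∀ y, |iteratedDeriv j f y| ≤ M) (x : ℝ) :
    |(steklovDiff δ)^[j] f x| ≤ (δ / 2) ^ j * M := by
  induction j generalizing f x with
  | zero => simpa using hM x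
  | succ j ih =>
    rw [Nat.cast_succ] at hf
    obtain ⟨-, -, hf'⟩ := contDiff_succ_iff_deriv.mp hf
    have hf1 : ContDiff ℝ 1 f := hf.of_le (by exact_mod_cast j.succ_pos)
    have hbound (y : ℝ) : |deriv ((steklovDiff δ)^[j] f) y| ≤ (δ / 2) ^ j * M := by
      rw [deriv_iterate_steklovDiff hf1]
      exact ih hf' (fun y => iteratedDeriv_succ' (f := f) ▸ hM y) y
    rw [Function.iterate_succ_apply', pow_succ', mul_assoc]
    exact abs_steklovDiff_le (contDiff_iterate_steklovDiff hf1 j) hbound hδ x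

end Steklov

theorem iter_diff_sup_le_deriv_general (f : ℝ → ℝ) (r : ℕ)
    (hf : ContDiff ℝ (r : ℕ∞) f)
    (hb : ∀ k ≤ r, BddAbove (Set.range fun x => |iteratedDeriv k f x|))
    (δ : ℝ) (hδ : 0 < δ) :
    (⨆ x, |(steklovDiff δ)^[r] f x|) ≤ δ ^ r / 2 ^ r * ⨆ x, |iteratedDeriv r f x| := by
  rw [← div_pow]
  exact ciSup_le <| abs_iterate_steklovDiff_le hδ r (by exact_mod_cast hf)
    fun y => le_ciSup (hb r le_rfl) y

theorem iter_diff_sup_le_deriv (f : ℝ → ℝ) (r : ℕ) (hr : 1 ≤ r)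
    (hf : ContDiff ℝ (r : ℕ∞) f)
    (hb : ∀ k ≤ r, BddAbove (Set.range fun x => |iteratedDeriv k f x|))
    (δ : ℝ) (hδ : 0 < δ) :
    (⨆ x, |(steklovDiff δ)^[r] f x|) ≤ δ ^ r / 2 ^ r * ⨆ x, |iteratedDeriv r f x| :=
  iter_diff_sup_le_deriv_general f r hf hb δ hδ
end

section
/- If f : ℝ → ℝ is bounded continuous and 0 < h ≤ δ, then ‖f - T_h f‖ ≤ 72 ‖f - T_δ f‖ in the sup norm. -/
/-!
Write `g = f - T_δ f`, `ε = ‖g‖` and `P = ‖Δ_δ f‖`, where `Δ_δ f x = f (x + δ) - f x`.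
Integrating by parts against the primitive
`t ↦ ∫₀^t Δ_δ f (x + s) ds = δ (T_δ f (x + t) - T_δ f x)` gives
`∫₀^δ t Δ_δ f (x + t) dt = δ² (T_δ f (x + δ) - T_δ² f x)`, so `|T_δ f (x + δ) - T_δ² f x| ≤ P / 2`.
As `T_δ f - T_δ² f = T_δ g`, the decomposition
`Δ_δ f x = g (x + δ) - g x + (T_δ f (x + δ) - T_δ² f x) - T_δ g x`
yields `P ≤ 3ε + P / 2`, i.e. `P ≤ 6ε`.
For `0 < t ≤ h ≤ δ` the same primitive bounds `|T_δ f (x + t) - T_δ f x|` by `P`, hence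
`|f x - f (x + t)| ≤ 2ε + P ≤ 8ε`, and averaging over `t ∈ (0, h]` bounds `|f x - T_h f x|`
by `8ε`.
-/

open Set intervalIntegral
open scoped fwdDiff

variable {f : ℝ → ℝ} {δ ε x : ℝ}

theorem mul_steklov (δ : ℝ) (f : ℝ → ℝ) (x : ℝ) :
    δ * steklov δ f x = ∫ t in (0:ℝ)..δ, f (x + t) := by
  rcases eq_or_ne δ 0 with rfl | hδ
  · simp
  · simp [steklov, hδ]

theorem intervalIntegrable_comp_add (hf : Continuous f) (x a b : ℝ) :
    IntervalIntegrable (fun t => f (x + t)) MeasureTheory.volume a b :=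
  (hf.comp (continuous_const_add x)).intervalIntegrable a b

theorem integral_comp_add_eq_sub (hf : Continuous f) (x c : ℝ) :
    ∫ t in (0:ℝ)..c, f (x + t) = (∫ t in (0:ℝ)..x + c, f t) - ∫ t in (0:ℝ)..x, f t := by
  rw [integral_comp_add_left, add_zero,
    integral_interval_sub_left (hf.intervalIntegrable _ _) (hf.intervalIntegrable _ _)]

theorem continuous_steklov (hf : Continuous f) : Continuous (steklov δ f) := by
  have hF := continuous_primitive
    (fun a b => hf.intervalIntegrable (μ := MeasureTheory.volume) a b) 0
  unfold steklov
  simp only [integral_comp_add_eq_sub hf]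
  fun_prop

theorem continuous_fwdDiff (hf : Continuous f) (δ : ℝ) : Continuous (Δ_[δ] f) :=
  (hf.comp (continuous_add_const δ)).sub hf

theorem abs_steklov_le {C : ℝ} (hδ : 0 < δ) (hC : ∀ t ∈ Ioc 0 δ, |f (x + t)| ≤ C) :
    |steklov δ f x| ≤ C := by
  have h := norm_integral_le_of_norm_le_const (a := 0) (b := δ) (f := fun t => f (x + t))
    (by rwa [uIoc_of_le hδ.le])
  rw [← mul_steklov, norm_mul, Real.norm_of_nonneg hδ.le, sub_zero, abs_of_pos hδ,
    mul_comm C] at h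
  exact le_of_mul_le_mul_left h hδ

theorem sub_steklov_eq (hf : Continuous f) (hδ : δ ≠ 0) :
    f x - steklov δ f x = steklov δ (fun y => f x - f y) x := by
  refine mul_left_cancel₀ hδ ?_
  rw [mul_sub, mul_steklov, mul_steklov,
    integral_sub intervalIntegrable_const (intervalIntegrable_comp_add hf x 0 δ)]
  simp

theorem steklov_sub_steklov_steklov (hf : Continuous f) (hδ : δ ≠ 0) :
    steklov δ f x - steklov δ (steklov δ f) x = steklov δ (f - steklov δ f) x := by
  refine mul_left_cancel₀ hδ ?_
  rw [mul_sub, mul_steklov, mul_steklov, mul_steklov, ← integral_sub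
    (intervalIntegrable_comp_add hf x 0 δ)
    (intervalIntegrable_comp_add (continuous_steklov hf) x 0 δ)]
  rfl

theorem integral_fwdDiff_comp_add (hf : Continuous f) (δ t x : ℝ) :
    ∫ s in (0:ℝ)..t, Δ_[δ] f (x + s) = δ * (steklov δ f (x + t) - steklov δ f x) := by
  have hshift : ∀ s, Δ_[δ] f (x + s) = f (x + δ + s) - f (x + s) := fun s => by
    rw [fwdDiff, add_right_comm]
  simp only [hshift, mul_sub, mul_steklov]
  rw [integral_sub (intervalIntegrable_comp_add hf _ 0 t) (intervalIntegrable_comp_add hf x 0 t)]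
  simp only [integral_comp_add_eq_sub hf]
  ring_nf

theorem integral_mul_fwdDiff_comp_add (hf : Continuous f) (δ x : ℝ) :
    ∫ t in (0:ℝ)..δ, t * Δ_[δ] f (x + t) =
      δ ^ 2 * (steklov δ f (x + δ) - steklov δ (steklov δ f) x) := by
  have hw : Continuous fun s => Δ_[δ] f (x + s) :=
    (continuous_fwdDiff hf δ).comp (continuous_const_add x)
  have hparts := integral_mul_deriv_eq_deriv_mul (u := id) (u' := fun _ => 1)
    (fun t _ => hasDerivAt_id t) (fun t _ => (hw.integral_hasStrictDerivAt 0 t).hasDerivAt)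
    intervalIntegrable_const (hw.intervalIntegrable 0 δ)
  simp only [id, one_mul, zero_mul, sub_zero, integral_fwdDiff_comp_add hf] at hparts
  rw [hparts, integral_const_mul,
    integral_sub (intervalIntegrable_comp_add (continuous_steklov hf) x 0 δ)
      intervalIntegrable_const,
    ← mul_steklov, integral_const]
  simp only [sub_zero, smul_eq_mul]
  ring

theorem abs_integral_mul_le {w : ℝ → ℝ} {P : ℝ} (hδ : 0 ≤ δ)
    (hw : ∀ t ∈ Ioc 0 δ, |w t| ≤ P) :
    |∫ t in (0:ℝ)..δ, t * w t| ≤ P * δ ^ 2 / 2 := by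
  have h := norm_integral_le_of_norm_le (f := fun t => t * w t) (g := fun t => t * P)
    (μ := MeasureTheory.volume) hδ
    (Filter.Eventually.of_forall fun t ht => by
      rw [Real.norm_eq_abs, abs_mul, abs_of_pos ht.1]
      exact mul_le_mul_of_nonneg_left (hw t ht) ht.1.le)
    ((by fun_prop : Continuous fun t : ℝ => t * P).intervalIntegrable _ _)
  rw [integral_mul_const, integral_id, Real.norm_eq_abs] at h
  exact h.trans_eq (by ring)

theorem abs_fwdDiff_le {P : ℝ} (hf : Continuous f) (hδ : 0 < δ)
    (hε : ∀ x, |f x - steklov δ f x| ≤ ε) (hP : ∀ x, |Δ_[δ] f x| ≤ P) (x : ℝ) :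
    |Δ_[δ] f x| ≤ 3 * ε + P / 2 := by
  have hweighted : |steklov δ f (x + δ) - steklov δ (steklov δ f) x| ≤ P / 2 := by
    have h := abs_integral_mul_le hδ.le fun t _ => hP (x + t)
    rw [integral_mul_fwdDiff_comp_add hf, abs_mul, abs_of_pos (by positivity)] at h
    exact le_of_mul_le_mul_left (h.trans_eq (by ring)) (by positivity)
  have hresidual : |steklov δ (f - steklov δ f) x| ≤ ε :=
    abs_steklov_le hδ fun t _ => hε (x + t)
  rw [← steklov_sub_steklov_steklov hf hδ.ne'] at hresidual
  have hx := hε x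
  have hxδ := hε (x + δ)
  rw [abs_le] at hweighted hresidual hx hxδ ⊢
  rw [fwdDiff]
  constructor <;> linarith

theorem abs_fwdDiff_le_six_mul (hf : Continuous f) (hδ : 0 < δ)
    (hε : ∀ x, |f x - steklov δ f x| ≤ ε) (hbdd : BddAbove (range fun x => |Δ_[δ] f x|))
    (x : ℝ) : |Δ_[δ] f x| ≤ 6 * ε := by
  have hP : ∀ y, |Δ_[δ] f y| ≤ ⨆ y, |Δ_[δ] f y| := le_ciSup hbdd
  have hsup : (⨆ y, |Δ_[δ] f y|) ≤ 3 * ε + (⨆ y, |Δ_[δ] f y|) / 2 :=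
    ciSup_le (abs_fwdDiff_le hf hδ hε hP)
  linarith [hP x]

theorem abs_sub_steklov_le {h P : ℝ} (hf : Continuous f) (hh : 0 < h) (hhδ : h ≤ δ)
    (hε : ∀ x, |f x - steklov δ f x| ≤ ε) (hP : ∀ x, |Δ_[δ] f x| ≤ P) (x : ℝ) :
    |f x - steklov h f x| ≤ 2 * ε + P := by
  have hδ := hh.trans_le hhδ
  rw [sub_steklov_eq hf hh.ne']
  refine abs_steklov_le hh fun t ht => ?_
  have hmove : |steklov δ f (x + t) - steklov δ f x| ≤ P := by
    have h := norm_integral_le_of_norm_le_const (a := 0) (b := t)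
      (f := fun s => Δ_[δ] f (x + s)) fun s _ => hP (x + s)
    rw [integral_fwdDiff_comp_add hf, norm_mul, Real.norm_of_nonneg hδ.le, sub_zero,
      abs_of_pos ht.1, Real.norm_eq_abs] at h
    have hP0 : 0 ≤ P := (abs_nonneg _).trans (hP 0)
    refine le_of_mul_le_mul_left (h.trans ?_) hδ
    nlinarith [ht.2]
  have hx := hε x
  have hxt := hε (x + t)
  rw [abs_le] at hmove hx hxt ⊢
  constructor <;> linarith

theorem diff_monotone_const (f : ℝ → ℝ) (hf : Continuous f)
    (hb : BddAbove (Set.range fun x => |f x|)) (h δ : ℝ) (hh : 0 < h) (hhδ : h ≤ δ) :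
    (⨆ x, |f x - steklov h f x|) ≤ 72 * ⨆ x, |f x - steklov δ f x| := by
  obtain ⟨M, hM⟩ := hb
  have hM : ∀ x, |f x| ≤ M := fun x => hM ⟨x, rfl⟩
  have hδ := hh.trans_le hhδ
  have hbdd_sub : BddAbove (range fun x => |f x - steklov δ f x|) :=
    ⟨M + M, forall_mem_range.2 fun x =>
      (abs_sub _ _).trans (add_le_add (hM x) (abs_steklov_le hδ fun t _ => hM (x + t)))⟩
  have hbdd_fwd : BddAbove (range fun x => |Δ_[δ] f x|) :=
    ⟨M + M, forall_mem_range.2 fun x => (abs_sub _ _).trans (add_le_add (hM _) (hM x))⟩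
  have hε : ∀ x, |f x - steklov δ f x| ≤ ⨆ x, |f x - steklov δ f x| := le_ciSup hbdd_sub
  refine ciSup_le fun x => ?_
  have h8 := abs_sub_steklov_le hf hh hhδ hε (abs_fwdDiff_le_six_mul hf hδ hε hbdd_fwd) x
  linarith [(abs_nonneg _).trans (hε 0)]
end

section
/- Let p : ℝ → [1, ∞) be measurable with 1 ≤ ess inf p and ess sup p =: p⁺ < ∞, and suppose 1/p is log-Hölder continuous, i.e. |1/p(x) - 1/p(y)| ≤ c / log(e + 1/|x-y|) for all x ≠ y, and there is p_∞ with |1/p(x) - 1/p_∞| ≤ c / log(e + |x|). Then the Steklov-type operators U_τ f(x) = ∫_{-1/2}^{1/2} f(x + τ + t) dt are uniformly bounded on the variable-exponent Lebesgue space L^{p(·)}(ℝ): there is a constant C depending only on p⁺ and c such that ‖U_τ f‖_{p(·)} ≤ C ‖f‖_{p(·)} for all τ ∈ ℝ and all f ∈ L^{p(·)}(ℝ). -/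
open MeasureTheory ENNReal

/-- The modular `∫ |f(y)/λ|^{p(y)} dy` of variable-exponent Lebesgue theory. -/
noncomputable def vModular (p : ℝ → ℝ) (f : ℝ → ℝ) (lam : ℝ) : ℝ≥0∞ :=
  ∫⁻ y, ENNReal.ofReal (|f y| / lam) ^ (p y)

/-- The Luxemburg norm of `f` in the variable-exponent Lebesgue space `L^{p(·)}(ℝ)`. -/
noncomputable def luxNorm (p : ℝ → ℝ) (f : ℝ → ℝ) : ℝ :=
  sInf {η : ℝ | 0 < η ∧ vModular p f η ≤ 1}

/-- Membership in `L^{p(·)}(ℝ)`: the modular is finite for some `λ > 0`. -/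
def MemVLp (p : ℝ → ℝ) (f : ℝ → ℝ) : Prop :=
  Measurable f ∧ ∃ lam : ℝ, 0 < lam ∧ vModular p f lam < ⊤

/-- The Steklov-type translation operator `U_τ f(x) = ∫_{-1/2}^{1/2} f(x+τ+t) dt`. -/
noncomputable def Uop (τ : ℝ) (f : ℝ → ℝ) : ℝ → ℝ :=
  fun x => ∫ t in (-(1:ℝ)/2)..(1/2), f (x + τ + t)

/-! Averages over unit intervals only feel `p` through its behaviour at infinity. If
`|p x - p∞| ≤ C / log (e + |x|)`, then for `0 ≤ a ≤ 1` one may trade `a ^ p x` for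
`e ^ (2C) * a ^ p∞` at the cost of the integrable error `(e + |x|) ^ (-2)`. Split `|f|` at
height `1`: the large part has integral at most `1`, so its averages are at most `1` and
`∫ avg ^ p ≲ ∫ avg = ∫ f_large`; for the small part pass from `p` to the constant exponent `p∞`,
apply Jensen's inequality and Fubini, and pass back. -/

open Set

theorem abs_sub_le_mul_of_abs_one_div_sub_le {a b P δ : ℝ} (ha : 0 < a) (hb : 0 < b)
    (haP : a ≤ P) (h : |1 / a - 1 / b| ≤ δ) : |a - b| ≤ P * b * δ := by
  have hab : a - b = -(a * b * (1 / a - 1 / b)) := by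
    field_simp
    ring
  rw [hab, abs_neg, abs_mul, abs_of_pos (mul_pos ha hb)]
  exact mul_le_mul (by gcongr) h (abs_nonneg _) (by nlinarith)

/-- Either `a ≤ M⁻²` and then `a ^ r ≤ a`, or `a ^ (r - s) ≤ M ^ (2 |r - s|) ≤ exp (2 C)`. -/
theorem ENNReal.rpow_le_ofReal_exp_mul_rpow_add {a : ℝ≥0∞} (ha : a ≤ 1) {r s C M : ℝ}
    (hr : 1 ≤ r) (hM : 1 < M) (hrs : |r - s| ≤ C / Real.log M) :
    a ^ r ≤ ENNReal.ofReal (Real.exp (2 * C)) * a ^ s + ENNReal.ofReal (M ^ (-2 : ℝ)) := by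
  have hlog : 0 < Real.log M := Real.log_pos hM
  have hM0 : 0 < M := by linarith
  have hrsC : |r - s| * Real.log M ≤ C := (le_div_iff₀ hlog).1 hrs
  rcases le_or_gt a (ENNReal.ofReal (M ^ (-2 : ℝ))) with hsmall | hlarge
  · exact le_add_left ((ENNReal.rpow_le_self_of_le_one ha hr).trans hsmall)
  have hexp : a ^ (r - s) ≤ ENNReal.ofReal (Real.exp (2 * C)) := by
    rcases le_or_gt 0 (r - s) with hrs0 | hrs0
    · have hC : 0 ≤ C := (mul_nonneg (abs_nonneg _) hlog.le).trans hrsC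
      calc a ^ (r - s) ≤ 1 := ENNReal.rpow_le_one ha hrs0
        _ ≤ ENNReal.ofReal (Real.exp (2 * C)) := by
          rw [← ENNReal.ofReal_one]
          exact ENNReal.ofReal_le_ofReal (Real.one_le_exp (by linarith))
    · rw [abs_of_neg hrs0] at hrsC
      calc a ^ (r - s) = (a ^ (s - r))⁻¹ := by rw [← ENNReal.rpow_neg, neg_sub]
        _ ≤ (ENNReal.ofReal (M ^ (-2 : ℝ)) ^ (s - r))⁻¹ :=
          ENNReal.inv_le_inv.2 (ENNReal.rpow_le_rpow hlarge.le (by linarith))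
        _ = ENNReal.ofReal (Real.exp (Real.log M * (2 * (s - r)))) := by
          rw [ENNReal.ofReal_rpow_of_pos (Real.rpow_pos_of_pos hM0 _), ← Real.rpow_mul hM0.le,
            ← ENNReal.ofReal_inv_of_pos (Real.rpow_pos_of_pos hM0 _), ← Real.rpow_neg hM0.le,
            Real.rpow_def_of_pos hM0]
          ring_nf
        _ ≤ ENNReal.ofReal (Real.exp (2 * C)) :=
          ENNReal.ofReal_le_ofReal (Real.exp_le_exp.2 (by linarith))
  calc a ^ r = a ^ (r - s) * a ^ s := by
        rw [← ENNReal.rpow_add _ _ (pos_of_gt hlarge).ne' (ha.trans_lt one_lt_top).ne,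
          sub_add_cancel]
    _ ≤ ENNReal.ofReal (Real.exp (2 * C)) * a ^ s := by gcongr
    _ ≤ _ := le_self_add

noncomputable def decayWeight (x : ℝ) : ℝ≥0∞ :=
  ENNReal.ofReal ((Real.exp 1 + |x|) ^ (-2 : ℝ))

theorem measurable_decayWeight : Measurable decayWeight := by
  unfold decayWeight
  fun_prop

theorem lintegral_decayWeight_le : ∫⁻ x, decayWeight x ≤ 4 := by
  have hle : ∀ x : ℝ, decayWeight x ≤ ENNReal.ofReal ((1 + x ^ 2)⁻¹) := fun x => by
    have he : 1 ≤ Real.exp 1 := Real.one_le_exp zero_le_one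
    rw [decayWeight, Real.rpow_neg (by positivity), Real.rpow_two]
    gcongr
    nlinarith [sq_abs x, abs_nonneg x]
  calc ∫⁻ x, decayWeight x ≤ ∫⁻ x : ℝ, ENNReal.ofReal ((1 + x ^ 2)⁻¹) := lintegral_mono hle
    _ = ENNReal.ofReal Real.pi := by
      rw [← ofReal_integral_eq_lintegral_ofReal integrable_inv_one_add_sq
        (Filter.Eventually.of_forall fun x => by positivity), integral_univ_inv_one_add_sq]
    _ ≤ 4 := by
      rw [← ENNReal.ofReal_ofNat]
      exact ENNReal.ofReal_le_ofReal Real.pi_le_four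

theorem lintegral_rpow_le_of_abs_sub_le {u : ℝ → ℝ≥0∞} (hu : ∀ x, u x ≤ 1) {r s : ℝ → ℝ} {C : ℝ}
    (hr : ∀ x, 1 ≤ r x) (hrs : ∀ x, |r x - s x| ≤ C / Real.log (Real.exp 1 + |x|)) :
    ∫⁻ x, u x ^ r x ≤ ENNReal.ofReal (Real.exp (2 * C)) * (∫⁻ x, u x ^ s x) + 4 := by
  have hM : ∀ x : ℝ, 1 < Real.exp 1 + |x| := fun x => by
    linarith [Real.add_one_lt_exp one_ne_zero, abs_nonneg x]
  calc ∫⁻ x, u x ^ r x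
      ≤ ∫⁻ x, ENNReal.ofReal (Real.exp (2 * C)) * u x ^ s x + decayWeight x :=
        lintegral_mono fun x =>
          ENNReal.rpow_le_ofReal_exp_mul_rpow_add (hu x) (hr x) (hM x) (hrs x)
    _ = ENNReal.ofReal (Real.exp (2 * C)) * (∫⁻ x, u x ^ s x) + ∫⁻ x, decayWeight x := by
        rw [lintegral_add_right _ measurable_decayWeight,
          lintegral_const_mul' _ _ ENNReal.ofReal_ne_top]
    _ ≤ _ := by gcongr; exact lintegral_decayWeight_le

theorem ENNReal.rpow_lintegral_le_lintegral_rpow {α : Type*} [MeasurableSpace α] {μ : Measure α}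
    [IsProbabilityMeasure μ] {q : ℝ} (hq : 1 < q) {g : α → ℝ≥0∞} (hg : AEMeasurable g μ) :
    (∫⁻ y, g y ∂μ) ^ q ≤ ∫⁻ y, g y ^ q ∂μ := by
  have hHolder := ENNReal.lintegral_mul_le_Lp_mul_Lq μ (Real.HolderConjugate.conjExponent hq) hg
    (aemeasurable_const (b := (1 : ℝ≥0∞)))
  simp only [Pi.mul_apply, mul_one, ENNReal.one_rpow, lintegral_const, measure_univ] at hHolder
  calc (∫⁻ y, g y ∂μ) ^ q ≤ ((∫⁻ y, g y ^ q ∂μ) ^ (1 / q)) ^ q := by gcongr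
    _ = ∫⁻ y, g y ^ q ∂μ := by
      rw [← ENNReal.rpow_mul, one_div_mul_cancel (by positivity), ENNReal.rpow_one]

instance : IsProbabilityMeasure (volume.restrict (Ioc (-(1:ℝ)/2) (1/2))) :=
  ⟨by norm_num [Real.volume_Ioc]⟩

noncomputable def shiftAvg (τ : ℝ) (g : ℝ → ℝ≥0∞) (x : ℝ) : ℝ≥0∞ :=
  ∫⁻ t in Ioc (-(1:ℝ)/2) (1/2), g (x + τ + t)

section ShiftAvg

variable {τ : ℝ} {g : ℝ → ℝ≥0∞}

theorem measurable_shiftAvg (hg : Measurable g) : Measurable (shiftAvg τ g) :=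
  Measurable.lintegral_prod_right' (f := fun z : ℝ × ℝ => g (z.1 + τ + z.2)) (by fun_prop)

theorem lintegral_shiftAvg (hg : Measurable g) : ∫⁻ x, shiftAvg τ g x = ∫⁻ y, g y := by
  unfold shiftAvg
  rw [lintegral_lintegral_swap (by fun_prop)]
  simp_rw [add_assoc, lintegral_add_right_eq_self (fun y => g y)]
  rw [lintegral_const, measure_univ, mul_one]

theorem shiftAvg_le_lintegral (x : ℝ) : shiftAvg τ g x ≤ ∫⁻ y, g y :=
  (setLIntegral_le_lintegral _ _).trans_eq (lintegral_add_left_eq_self g (x + τ))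

theorem shiftAvg_le_one (hg : ∀ y, g y ≤ 1) (x : ℝ) : shiftAvg τ g x ≤ 1 :=
  (lintegral_mono fun _ => hg _).trans_eq (by rw [lintegral_const, measure_univ, one_mul])

theorem shiftAvg_add (hg : Measurable g) (h : ℝ → ℝ≥0∞) (x : ℝ) :
    shiftAvg τ (g + h) x = shiftAvg τ g x + shiftAvg τ h x :=
  lintegral_add_left (by fun_prop) _

theorem rpow_shiftAvg_le {q : ℝ} (hq : 1 < q) (hg : Measurable g) (x : ℝ) :
    shiftAvg τ g x ^ q ≤ shiftAvg τ (fun y => g y ^ q) x :=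
  ENNReal.rpow_lintegral_le_lintegral_rpow hq (by fun_prop)

end ShiftAvg

theorem ofReal_abs_Uop_le (τ : ℝ) (f : ℝ → ℝ) (x : ℝ) :
    ENNReal.ofReal |Uop τ f x| ≤ shiftAvg τ (fun y => ENNReal.ofReal |f y|) x := by
  calc ENNReal.ofReal |Uop τ f x| = ‖∫ t in Ioc (-(1:ℝ)/2) (1/2), f (x + τ + t)‖ₑ := by
        rw [Uop, intervalIntegral.integral_of_le (by norm_num), Real.enorm_eq_ofReal_abs]
    _ ≤ ∫⁻ t in Ioc (-(1:ℝ)/2) (1/2), ‖f (x + τ + t)‖ₑ := enorm_integral_le_lintegral_enorm _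
    _ = _ := by simp only [Real.enorm_eq_ofReal_abs]; rfl

section ModularEstimate

variable {p : ℝ → ℝ} {pinf C : ℝ} {g : ℝ → ℝ≥0∞}

theorem lintegral_rpow_shiftAvg_le_of_lintegral_le_one (hp1 : ∀ x, 1 ≤ p x) (hpinf : 1 ≤ pinf)
    (hd : ∀ x, |p x - pinf| ≤ C / Real.log (Real.exp 1 + |x|)) (hg : Measurable g)
    (hg1 : ∫⁻ y, g y ≤ 1) (τ : ℝ) :
    ∫⁻ x, shiftAvg τ g x ^ p x ≤ ENNReal.ofReal (Real.exp (2 * C)) + 4 := by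
  have hA1 : ∀ x, shiftAvg τ g x ≤ 1 := fun x => (shiftAvg_le_lintegral x).trans hg1
  calc ∫⁻ x, shiftAvg τ g x ^ p x
      ≤ ENNReal.ofReal (Real.exp (2 * C)) * (∫⁻ x, shiftAvg τ g x ^ pinf) + 4 :=
        lintegral_rpow_le_of_abs_sub_le (s := fun _ => pinf) hA1 hp1 hd
    _ ≤ ENNReal.ofReal (Real.exp (2 * C)) * (∫⁻ x, shiftAvg τ g x) + 4 := by
        gcongr with x
        exact ENNReal.rpow_le_self_of_le_one (hA1 x) hpinf
    _ ≤ ENNReal.ofReal (Real.exp (2 * C)) + 4 := by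
        rw [lintegral_shiftAvg hg]
        gcongr
        exact mul_le_of_le_one_right' hg1

theorem lintegral_rpow_shiftAvg_le_of_le_one (hp1 : ∀ x, 1 ≤ p x) (hpinf : 1 < pinf)
    (hd : ∀ x, |p x - pinf| ≤ C / Real.log (Real.exp 1 + |x|)) (hg : Measurable g)
    (hg1 : ∀ y, g y ≤ 1) (hgp : ∫⁻ y, g y ^ p y ≤ 1) (τ : ℝ) :
    ∫⁻ x, shiftAvg τ g x ^ p x ≤
      ENNReal.ofReal (Real.exp (2 * C)) * (ENNReal.ofReal (Real.exp (2 * C)) + 4) + 4 := by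
  calc ∫⁻ x, shiftAvg τ g x ^ p x
      ≤ ENNReal.ofReal (Real.exp (2 * C)) * (∫⁻ x, shiftAvg τ g x ^ pinf) + 4 :=
        lintegral_rpow_le_of_abs_sub_le (s := fun _ => pinf) (shiftAvg_le_one hg1) hp1 hd
    _ ≤ ENNReal.ofReal (Real.exp (2 * C)) * (∫⁻ x, shiftAvg τ (fun y => g y ^ pinf) x) + 4 := by
        gcongr with x
        exact rpow_shiftAvg_le hpinf hg x
    _ = ENNReal.ofReal (Real.exp (2 * C)) * (∫⁻ y, g y ^ pinf) + 4 := by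
        rw [lintegral_shiftAvg (hg.pow_const _)]
    _ ≤ ENNReal.ofReal (Real.exp (2 * C)) *
          (ENNReal.ofReal (Real.exp (2 * C)) * (∫⁻ y, g y ^ p y) + 4) + 4 := by
        gcongr
        exact lintegral_rpow_le_of_abs_sub_le (r := fun _ => pinf) hg1 (fun _ => hpinf.le)
          fun x => by rw [abs_sub_comm]; exact hd x
    _ ≤ _ := by
        gcongr
        exact mul_le_of_le_one_right' hgp

theorem lintegral_rpow_shiftAvg_le {pplus : ℝ} (hp : Measurable p) (hp1 : ∀ x, 1 ≤ p x)
    (hpb : ∀ x, p x ≤ pplus) (hpinf : 1 < pinf)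
    (hd : ∀ x, |p x - pinf| ≤ C / Real.log (Real.exp 1 + |x|)) (hg : Measurable g)
    (hgp : ∫⁻ y, g y ^ p y ≤ 1) (τ : ℝ) :
    ∫⁻ x, shiftAvg τ g x ^ p x ≤ 2 ^ pplus * ((ENNReal.ofReal (Real.exp (2 * C)) + 4) +
      (ENNReal.ofReal (Real.exp (2 * C)) * (ENNReal.ofReal (Real.exp (2 * C)) + 4) + 4)) := by
  set small : ℝ → ℝ≥0∞ := fun y => min (g y) 1
  set large : ℝ → ℝ≥0∞ := fun y => g y - small y
  have hlarge : Measurable large := hg.sub (hg.min measurable_const)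
  have hsplit : g = large + small := funext fun y => (tsub_add_cancel_of_le (min_le_left _ _)).symm
  have hlarge_le : ∀ y, large y ≤ g y ^ p y := fun y => by
    rw [tsub_le_iff_right]
    rcases le_total (g y) 1 with h | h
    · rw [show small y = g y from min_eq_left h]
      exact le_add_self
    · exact (ENNReal.le_rpow_self_of_one_le h (hp1 y)).trans le_self_add
  have hsmall_p : ∫⁻ y, small y ^ p y ≤ 1 :=
    (lintegral_mono fun y => ENNReal.rpow_le_rpow (min_le_left _ _) (by linarith [hp1 y])).trans
      hgp
  have hpt : ∀ x, shiftAvg τ g x ^ p x ≤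
      2 ^ pplus * (shiftAvg τ large x ^ p x + shiftAvg τ small x ^ p x) := fun x => by
    rw [hsplit, shiftAvg_add hlarge]
    refine (ENNReal.rpow_add_le_mul_rpow_add_rpow _ _ (hp1 x)).trans ?_
    gcongr
    exacts [one_le_two, by linarith [hpb x]]
  calc ∫⁻ x, shiftAvg τ g x ^ p x
      ≤ ∫⁻ x, 2 ^ pplus * (shiftAvg τ large x ^ p x + shiftAvg τ small x ^ p x) :=
        lintegral_mono hpt
    _ = 2 ^ pplus * ((∫⁻ x, shiftAvg τ large x ^ p x) + ∫⁻ x, shiftAvg τ small x ^ p x) := by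
        rw [lintegral_const_mul' _ _ (by simp),
          lintegral_add_left ((measurable_shiftAvg hlarge).pow hp)]
    _ ≤ _ := by
        gcongr
        · exact lintegral_rpow_shiftAvg_le_of_lintegral_le_one hp1 hpinf.le hd hlarge
            ((lintegral_mono hlarge_le).trans hgp) τ
        · exact lintegral_rpow_shiftAvg_le_of_le_one hp1 hpinf hd (hg.min measurable_const)
            (fun _ => min_le_right _ _) hsmall_p τ

end ModularEstimate

section Luxemburg

variable {p : ℝ → ℝ}

theorem vModular_Uop_le (hp0 : ∀ x, 0 ≤ p x) (τ : ℝ) (f : ℝ → ℝ) {η : ℝ} (hη : 0 < η) :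
    vModular p (Uop τ f) η ≤ ∫⁻ x, shiftAvg τ (fun y => ENNReal.ofReal (|f y| / η)) x ^ p x := by
  refine lintegral_mono fun x => ENNReal.rpow_le_rpow ?_ (hp0 x)
  have hdiv : Uop τ (fun y => f y / η) x = Uop τ f x / η := intervalIntegral.integral_div η _
  calc ENNReal.ofReal (|Uop τ f x| / η) = ENNReal.ofReal |Uop τ (fun y => f y / η) x| := by
        rw [hdiv, abs_div, abs_of_pos hη]
    _ ≤ shiftAvg τ (fun y => ENNReal.ofReal |f y / η|) x := ofReal_abs_Uop_le τ _ x
    _ = _ := by simp_rw [abs_div, abs_of_pos hη]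

theorem vModular_mul_le (hp1 : ∀ y, 1 ≤ p y) (f : ℝ → ℝ) (lam : ℝ) {M : ℝ} (hM : 1 ≤ M) :
    vModular p f (M * lam) ≤ ENNReal.ofReal M⁻¹ * vModular p f lam := by
  have hM' : ENNReal.ofReal M⁻¹ ≤ 1 := ENNReal.ofReal_le_one.2 (inv_le_one_of_one_le₀ hM)
  rw [vModular, vModular, ← lintegral_const_mul' _ _ ENNReal.ofReal_ne_top]
  refine lintegral_mono fun y => ?_
  rw [mul_comm M lam, ← div_div, div_eq_inv_mul _ M, ENNReal.ofReal_mul (by positivity),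
    ENNReal.mul_rpow_of_nonneg _ _ (by linarith [hp1 y])]
  gcongr
  exact ENNReal.rpow_le_self_of_le_one hM' (hp1 y)

theorem vModular_le_one_of_le (hp1 : ∀ y, 1 ≤ p y) {f : ℝ → ℝ} {η : ℝ} {K : ℝ≥0∞}
    (hK : K ≠ ⊤) (h : vModular p f η ≤ K) : vModular p f (max K.toReal 1 * η) ≤ 1 := by
  have hpos : 0 < max K.toReal 1 := lt_max_of_lt_right one_pos
  calc vModular p f (max K.toReal 1 * η)
      ≤ ENNReal.ofReal (max K.toReal 1)⁻¹ * vModular p f η :=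
        vModular_mul_le hp1 f η (le_max_right _ _)
    _ ≤ ENNReal.ofReal (max K.toReal 1)⁻¹ * ENNReal.ofReal (max K.toReal 1) := by
        gcongr
        rw [← ENNReal.ofReal_toReal hK] at h
        exact h.trans (ENNReal.ofReal_le_ofReal (le_max_left _ _))
    _ = 1 := by rw [← ENNReal.ofReal_mul (by positivity), inv_mul_cancel₀ hpos.ne',
        ENNReal.ofReal_one]

theorem exists_vModular_le_one (hp1 : ∀ y, 1 ≤ p y) {f : ℝ → ℝ} (hf : MemVLp p f) :
    ∃ η, 0 < η ∧ vModular p f η ≤ 1 := by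
  obtain ⟨-, lam, hlam, hfin⟩ := hf
  exact ⟨_, mul_pos (lt_max_of_lt_right one_pos) hlam, vModular_le_one_of_le hp1 hfin.ne le_rfl⟩

theorem luxNorm_le_mul {f g : ℝ → ℝ} {K : ℝ} (hK : 0 < K)
    (hf : ∃ η, 0 < η ∧ vModular p f η ≤ 1)
    (h : ∀ η, 0 < η → vModular p f η ≤ 1 → vModular p g (K * η) ≤ 1) :
    luxNorm p g ≤ K * luxNorm p f := by
  rw [← div_le_iff₀' hK]
  refine le_csInf hf fun η ⟨hη, hmod⟩ => ?_
  rw [div_le_iff₀' hK]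
  exact csInf_le ⟨0, fun _ hη' => hη'.1.le⟩ ⟨by positivity, h η hη hmod⟩

end Luxemburg

theorem steklov_translate_uniformly_bounded_general
    (p : ℝ → ℝ) (hp : Measurable p) (pplus c : ℝ)
    (hp1 : ∀ x, 1 ≤ p x) (hpb : ∀ x, p x ≤ pplus)
    (hdecay : ∃ pinf : ℝ, 1 < pinf ∧
      ∀ x : ℝ, |1 / p x - 1 / pinf| ≤ c / Real.log (Real.exp 1 + |x|)) :
    ∃ C : ℝ, 0 < C ∧ ∀ τ : ℝ, ∀ f : ℝ → ℝ, MemVLp p f →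
      luxNorm p (Uop τ f) ≤ C * luxNorm p f := by
  obtain ⟨pinf, hpinf, hdec⟩ := hdecay
  have hd : ∀ x, |p x - pinf| ≤ pplus * pinf * c / Real.log (Real.exp 1 + |x|) := fun x => by
    rw [mul_div_assoc]
    exact abs_sub_le_mul_of_abs_one_div_sub_le (by linarith [hp1 x]) (by linarith) (hpb x)
      (hdec x)
  set E := ENNReal.ofReal (Real.exp (2 * (pplus * pinf * c)))
  set K : ℝ≥0∞ := 2 ^ pplus * ((E + 4) + (E * (E + 4) + 4))
  have hK : K ≠ ⊤ := by finiteness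
  refine ⟨max K.toReal 1, lt_max_of_lt_right one_pos, fun τ f hf =>
    luxNorm_le_mul (lt_max_of_lt_right one_pos) (exists_vModular_le_one hp1 hf)
      fun η hη hmod => vModular_le_one_of_le hp1 hK ?_⟩
  exact (vModular_Uop_le (fun x => zero_le_one.trans (hp1 x)) τ f hη).trans
    (lintegral_rpow_shiftAvg_le hp hp1 hpb hpinf hd (hf.1.abs.div_const η).ennreal_ofReal hmod τ)

theorem steklov_translate_uniformly_bounded
    (p : ℝ → ℝ) (hp : Measurable p) (pplus c : ℝ)
    (hp1 : ∀ x, 1 ≤ p x) (hpb : ∀ x, p x ≤ pplus)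
    (hlog : ∀ x y : ℝ, x ≠ y →
      |1 / p x - 1 / p y| ≤ c / Real.log (Real.exp 1 + 1 / |x - y|))
    (hdecay : ∃ pinf : ℝ, 1 < pinf ∧
      ∀ x : ℝ, |1 / p x - 1 / pinf| ≤ c / Real.log (Real.exp 1 + |x|)) :
    ∃ C : ℝ, 0 < C ∧ ∀ τ : ℝ, ∀ f : ℝ → ℝ, MemVLp p f →
      luxNorm p (Uop τ f) ≤ C * luxNorm p f :=
  steklov_translate_uniformly_bounded_general p hp pplus c hp1 hpb hdecay
end
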